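/- arXiv:1901.06906 — 10 statements merged into one kernel-verified Lean document; each statement's English description precedes it below -/
import Mathlib

section
/- Let X and Y be compact connected Hausdorff topological spaces and let F : X → Y be a continuous surjective map which is monotone, i.e. for every y ∈ Y the fiber F⁻¹({y}) is a connected subset of X. Then for every connected subset Z ⊆ Y, the preimage F⁻¹(Z) is a connected subset of X. -/
/-- Let `X` and `Y` be compact connected Hausdorff topological spaces and let `F : X → Y` be
a continuous surjective map which is monotone, i.e. every fiber `F ⁻¹' {y}` is a connected
subset of `X`. Then for every connected subset `Z ⊆ Y`, the preimage `F ⁻¹' Z` is a connected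
subset of `X`. -/
theorem preimage_connected_of_monotone_surjective
    {X Y : Type*} [TopologicalSpace X] [TopologicalSpace Y]
    [CompactSpace X] [CompactSpace Y] [ConnectedSpace X] [ConnectedSpace Y]
    [T2Space X] [T2Space Y]
    (F : X → Y) (hcont : Continuous F) (hsurj : Function.Surjective F)
    (hmono : ∀ y : Y, IsConnected (F ⁻¹' {y}))
    (Z : Set Y) (hZ : IsPreconnected Z) :
    IsPreconnected (F ⁻¹' Z) := by
  have hclosed : IsClosedMap F := hcont.isClosedMap
  rintro u v hu hv hcover ⟨a, haZ, hau⟩ ⟨b, hbZ, hbv⟩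
  by_contra h
  push_neg at h
  rw [Set.eq_empty_iff_forall_notMem] at h
  -- For each y ∈ Z, the fiber is contained in u or in v
  have key : ∀ y ∈ Z, F ⁻¹' {y} ⊆ u ∨ F ⁻¹' {y} ⊆ v := by
    intro y hy
    have hfib := hmono y
    have hsub : F ⁻¹' {y} ⊆ u ∪ v := fun x hx => hcover (by simpa using hx.symm ▸ hy)
    by_contra hc
    push_neg at hc
    obtain ⟨p, hp, hpu⟩ := Set.not_subset.1 hc.1
    obtain ⟨q, hq, hqv⟩ := Set.not_subset.1 hc.2
    have hpv : p ∈ v := (hsub hp).resolve_left hpu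
    have hqu : q ∈ u := (hsub hq).resolve_right hqv
    obtain ⟨x, hxfib, hxu, hxv⟩ := hfib.isPreconnected u v hu hv
      (fun x hx => hsub hx) ⟨q, hq, hqu⟩ ⟨p, hp, hpv⟩
    have hxZ : x ∈ F ⁻¹' Z := by
      simp only [Set.mem_preimage, Set.mem_singleton_iff] at hxfib
      simp [Set.mem_preimage, hxfib, hy]
    exact h x ⟨hxZ, hxu, hxv⟩
  set P := (F '' uᶜ)ᶜ with hP
  set Q := (F '' vᶜ)ᶜ with hQ
  have hPopen : IsOpen P := (hclosed _ hu.isClosed_compl).isOpen_compl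
  have hQopen : IsOpen Q := (hclosed _ hv.isClosed_compl).isOpen_compl
  have hfibP : ∀ y : Y, (F ⁻¹' {y} ⊆ u ↔ y ∈ P) := by
    intro y
    constructor
    · rintro hsub ⟨x, hxu, rfl⟩
      exact hxu (hsub rfl)
    · intro hyP x hx
      by_contra hxu
      exact hyP ⟨x, hxu, hx⟩
  have hfibQ : ∀ y : Y, (F ⁻¹' {y} ⊆ v ↔ y ∈ Q) := by
    intro y
    constructor
    · rintro hsub ⟨x, hxv, rfl⟩
      exact hxv (hsub rfl)
    · intro hyQ x hx
      by_contra hxv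
      exact hyQ ⟨x, hxv, hx⟩
  have hZcover : Z ⊆ P ∪ Q := by
    intro y hy
    rcases key y hy with h1 | h1
    · exact Or.inl ((hfibP y).1 h1)
    · exact Or.inr ((hfibQ y).1 h1)
  have hZP : (Z ∩ P).Nonempty := by
    refine ⟨F a, haZ, (hfibP (F a)).1 ?_⟩
    rcases key (F a) haZ with h1 | h1
    · exact h1
    · exact absurd (h1 rfl) (fun hav => h a ⟨haZ, hau, hav⟩)
  have hZQ : (Z ∩ Q).Nonempty := by
    refine ⟨F b, hbZ, (hfibQ (F b)).1 ?_⟩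
    rcases key (F b) hbZ with h1 | h1
    · exact absurd (h1 rfl) (fun hbu => h b ⟨hbZ, hbu, hbv⟩)
    · exact h1
  obtain ⟨y, hyZ, hyP, hyQ⟩ := hZ P Q hPopen hQopen hZcover hZP hZQ
  obtain ⟨x, hx⟩ := hsurj y
  have hxu : x ∈ u := (hfibP y).2 hyP (by simp [hx])
  have hxv : x ∈ v := (hfibQ y).2 hyQ (by simp [hx])
  exact h x ⟨by simp [hx, hyZ], hxu, hxv⟩
end

section
/- Let X and Y be topological spaces with X compact and Y Hausdorff, and let F : X → Y be continuous. Let B ⊆ Y, put A = F⁻¹(B), and assume that the image F(A) = F '' A is a connected subset of Y and that for every y ∈ F(A) the full preimage F⁻¹({y}) is connected. Then A is a connected subset of X. -/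
/-- Let `X` be compact and `Y` Hausdorff, `F : X → Y` continuous, `B ⊆ Y` and `A = F ⁻¹' B`.
If the image `F '' A` is connected and for every `y ∈ F '' A` the full preimage `F ⁻¹' {y}`
is connected, then `A` is connected. -/
theorem preimage_preconnected_of_image_preconnected
    {X Y : Type*} [TopologicalSpace X] [TopologicalSpace Y]
    [CompactSpace X] [T2Space Y]
    (F : X → Y) (hcont : Continuous F) (B : Set Y) (A : Set X) (hA : A = F ⁻¹' B)
    (himg : IsPreconnected (F '' A))
    (hmono : ∀ y ∈ F '' A, IsPreconnected (F ⁻¹' {y})) :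
    IsPreconnected A := by
  -- fibers over F '' A are contained in A
  have hfib : ∀ y ∈ F '' A, F ⁻¹' {y} ⊆ A := by
    rintro y hy x hx
    obtain ⟨x', hx', rfl⟩ := hy
    rw [hA] at hx' ⊢
    have hfx : F x = F x' := hx
    simpa [Set.mem_preimage, hfx] using hx'
  rw [isPreconnected_closed_iff]
  intro u v hu hv hAuv hAu hAv
  by_contra hempty
  rw [Set.not_nonempty_iff_eq_empty] at hempty
  -- images of closed sets are closed
  have hFu : IsClosed (F '' u) := (hu.isCompact.image hcont).isClosed
  have hFv : IsClosed (F '' v) := (hv.isCompact.image hcont).isClosed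
  -- each fiber misses u or misses v
  have hdich : ∀ y ∈ F '' A, y ∉ F '' u ∨ y ∉ F '' v := by
    intro y hy
    by_contra h
    push_neg at h
    obtain ⟨⟨xu, hxu, hxu'⟩, ⟨xv, hxv, hxv'⟩⟩ := h
    have hsub : F ⁻¹' {y} ⊆ u ∪ v := fun x hx => hAuv (hfib y hy hx)
    have := isPreconnected_closed_iff.mp (hmono y hy) u v hu hv hsub
      ⟨xu, hxu', hxu⟩ ⟨xv, hxv', hxv⟩
    obtain ⟨x, hx1, hx2, hx3⟩ := this
    have : x ∈ A ∩ (u ∩ v) := ⟨hfib y hy hx1, hx2, hx3⟩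
    simp [hempty] at this
  -- apply connectedness of image with the open sets (F '' u)ᶜ, (F '' v)ᶜ
  have himg' := himg (F '' v)ᶜ (F '' u)ᶜ hFv.isOpen_compl hFu.isOpen_compl
    (fun y hy => (hdich y hy).imp (fun h => h) (fun h => h) |>.symm.imp id id)
    ?_ ?_
  · obtain ⟨y, hy, hyv, hyu⟩ := himg'
    obtain ⟨x, hxA, rfl⟩ := hy
    rcases hAuv hxA with hx | hx
    · exact hyu ⟨x, hx, rfl⟩
    · exact hyv ⟨x, hx, rfl⟩
  · obtain ⟨x, hxA, hxu⟩ := hAu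
    refine ⟨F x, ⟨x, hxA, rfl⟩, ?_⟩
    rcases hdich (F x) ⟨x, hxA, rfl⟩ with h | h
    · exact absurd ⟨x, hxu, rfl⟩ h
    · exact h
  · obtain ⟨x, hxA, hxv⟩ := hAv
    refine ⟨F x, ⟨x, hxA, rfl⟩, ?_⟩
    rcases hdich (F x) ⟨x, hxA, rfl⟩ with h | h
    · exact h
    · exact absurd ⟨x, hxv, rfl⟩ h
end

section
/- Let 1 < λ ≤ 3 and |b| ≤ (3−λ)/(λ−1), and let q = q_{λ,b} be the bimodal map with turning point c¹. Suppose that q(c¹) ∈ [c², a], that q²(c¹) ∈ (−a, c¹) (strictly to the left of c¹), and that q³(c¹) ∈ [c², a]. Then q⁴(c¹) ≠ c¹. In other words, the period-four itinerary {c¹, J², J⁰, J², c¹, …} cannot be realized by any bimodal map q_{λ,b}: its bifurcation equation (λ⁴−1)b = −(λ²+1)(λ−1)² factors as (λ²+1)·[(λ²−1)b + (λ−1)²] = 0 and hence forces q²(c¹) = c¹. -/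
/-- The bimodal piecewise-linear map `q_{λ,b}` of constant slope `±λ`:
`q(x) = λx+1` for `x ≤ c¹`, `q(x) = −λx+b` for `c¹ ≤ x ≤ c²`, `q(x) = λx−1` for `x ≥ c²`,
where `c¹ = (b−1)/(2λ)` and `c² = (b+1)/(2λ)` (the formulas agree at `c¹` and `c²`). -/
noncomputable def qmap (lam b : ℝ) (x : ℝ) : ℝ :=
  if x ≤ (b - 1) / (2 * lam) then lam * x + 1
  else if x ≤ (b + 1) / (2 * lam) then -lam * x + b
  else lam * x - 1

lemma qmap_left (lam b x : ℝ) (hx : x ≤ (b - 1) / (2 * lam)) :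
    qmap lam b x = lam * x + 1 := by
  unfold qmap; rw [if_pos hx]

lemma qmap_right (lam b x : ℝ) (hlam : 0 < lam) (hx : (b + 1) / (2 * lam) ≤ x) :
    qmap lam b x = lam * x - 1 := by
  have h2l : (0:ℝ) < 2 * lam := by linarith
  have hc12 : (b - 1) / (2 * lam) < (b + 1) / (2 * lam) :=
    div_lt_div_of_pos_right (by linarith) h2l
  have hx1 : ¬ x ≤ (b - 1) / (2 * lam) := not_le.mpr (lt_of_lt_of_le hc12 hx)
  unfold qmap
  rw [if_neg hx1]
  by_cases hx2 : x ≤ (b + 1) / (2 * lam)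
  · rw [if_pos hx2]
    have hxe : x = (b + 1) / (2 * lam) := le_antisymm hx2 hx
    have : 2 * lam * x = b + 1 := by
      rw [hxe]; field_simp
    linarith
  · rw [if_neg hx2]

/-- Let `1 < λ ≤ 3` and `|b| ≤ (3−λ)/(λ−1)`, and suppose that `q(c¹) ∈ [c², a]`, that
`q²(c¹) ∈ (−a, c¹)` (strictly to the left of `c¹`) and that `q³(c¹) ∈ [c², a]`. Then
`q⁴(c¹) ≠ c¹`: the period-four itinerary `{c¹, J², J⁰, J², c¹, …}` cannot be realized,
since its bifurcation equation `(λ⁴−1)b = −(λ²+1)(λ−1)²` factors as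
`(λ²+1)·[(λ²−1)b + (λ−1)²] = 0` and hence forces `q²(c¹) = c¹`. -/
theorem itinerary_period_four_impossible (lam b : ℝ) (h1 : 1 < lam) (h3 : lam ≤ 3)
    (hb : |b| ≤ (3 - lam) / (lam - 1))
    (h1st : (qmap lam b)^[1] ((b - 1) / (2 * lam)) ∈
      Set.Icc ((b + 1) / (2 * lam)) (1 / (lam - 1)))
    (h2nd : (qmap lam b)^[2] ((b - 1) / (2 * lam)) ∈
      Set.Ioo (-(1 / (lam - 1))) ((b - 1) / (2 * lam)))
    (h3rd : (qmap lam b)^[3] ((b - 1) / (2 * lam)) ∈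
      Set.Icc ((b + 1) / (2 * lam)) (1 / (lam - 1))) :
    (qmap lam b)^[4] ((b - 1) / (2 * lam)) ≠ (b - 1) / (2 * lam) := by
  have hlam : (0:ℝ) < lam := by linarith
  set c1 := (b - 1) / (2 * lam) with hc1
  have e1 : (qmap lam b)^[1] c1 = lam * c1 + 1 := by
    simp [Function.iterate_one, qmap_left lam b c1 le_rfl]
  have e2 : (qmap lam b)^[2] c1 = lam * (lam * c1 + 1) - 1 := by
    have : (qmap lam b)^[2] c1 = qmap lam b ((qmap lam b)^[1] c1) := by
      exact Function.iterate_succ_apply' _ _ _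
    rw [this, e1, qmap_right lam b _ hlam (by rw [← e1]; exact h1st.1)]
  have e3 : (qmap lam b)^[3] c1 = lam * (lam * (lam * c1 + 1) - 1) + 1 := by
    have : (qmap lam b)^[3] c1 = qmap lam b ((qmap lam b)^[2] c1) := by
      exact Function.iterate_succ_apply' _ _ _
    rw [this, e2, qmap_left lam b _ (by rw [← e2]; exact h2nd.2.le)]
  have e4 : (qmap lam b)^[4] c1 = lam * (lam * (lam * (lam * c1 + 1) - 1) + 1) - 1 := by
    have : (qmap lam b)^[4] c1 = qmap lam b ((qmap lam b)^[3] c1) := by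
      exact Function.iterate_succ_apply' _ _ _
    rw [this, e3, qmap_right lam b _ hlam (by rw [← e3]; exact h3rd.1)]
  intro heq
  rw [e4] at heq
  have hstrict : lam * (lam * c1 + 1) - 1 < c1 := by rw [← e2]; exact h2nd.2
  have hid : lam * (lam * (lam * (lam * c1 + 1) - 1) + 1) - 1 - c1 =
      (lam ^ 2 + 1) * ((lam * (lam * c1 + 1) - 1) - c1) := by ring
  nlinarith [sq_nonneg lam]
end

section
/- Let λ > 0 satisfy λ⁴ = λ² + 1 (so λ = √((1+√5)/2) ≈ 1.27202, and automatically 1 < λ < 3), and let b = 0, so that c¹ = −1/(2λ) and c² = 1/(2λ). Then the turning point c¹ of q = q_{λ,0} is periodic of (exact) period 6 with itinerary {c¹, J², J¹, J², J⁰, J², c¹, …}: q(c¹) = 1/2 ∈ (c², a), q²(c¹) = λ/2 − 1 ∈ (c¹, c²), q³(c¹) = −λ²/2 + λ ∈ (c², a), q⁴(c¹) = −λ³/2 + λ² − 1 ∈ (−a, c¹), q⁵(c¹) = −λ⁴/2 + λ³ − λ + 1 ∈ (c², a), and q⁶(c¹) = c¹. -/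
/-!
Along the orbit of `c = c¹ = −1/(2λ)` each iterate `qᵏ(c)` is a polynomial in `λ` once its
branch is known, and every branch is decided by the bounds `1.272 < λ < 1.2721` that follow
from `λ² = (1 + √5)/2`. The orbit closes because `λ·q⁵(c) − 1 − c`, after clearing
denominators, is a multiple of `λ⁴ − λ² − 1`.
-/

open Set Function

section Branches

variable {lam b x : ℝ}

theorem qmap_of_le (hx : x ≤ (b - 1) / (2 * lam)) : qmap lam b x = lam * x + 1 :=
  if_pos hx

theorem qmap_of_mem_Ioc (hx : x ∈ Ioc ((b - 1) / (2 * lam)) ((b + 1) / (2 * lam))) :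
    qmap lam b x = -lam * x + b := by
  rw [qmap, if_neg hx.1.not_ge, if_pos hx.2]

theorem qmap_of_lt (hlam : 0 < lam) (hx : (b + 1) / (2 * lam) < x) :
    qmap lam b x = lam * x - 1 := by
  have hc : (b - 1) / (2 * lam) < (b + 1) / (2 * lam) := by gcongr; linarith
  rw [qmap, if_neg (hc.trans hx).not_ge, if_neg hx.not_ge]

end Branches

theorem bounds_of_sq_eq_goldenRatio {lam : ℝ} (hpos : 0 < lam) (hroot : lam ^ 4 = lam ^ 2 + 1) :
    1.272 < lam ∧ lam < 1.2721 := by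
  have hsq : (2 * lam ^ 2 - 1) ^ 2 = 5 := by linear_combination 4 * hroot
  have hgt : 1 < lam ^ 2 := by nlinarith [sq_nonneg (lam ^ 2 - 1)]
  have hsq_lo : 1.618 < lam ^ 2 := by nlinarith
  have hsq_hi : lam ^ 2 < 1.6181 := by nlinarith
  constructor <;> nlinarith

section OrbitBranches

variable {lam : ℝ} (hlo : 1.272 < lam) (hhi : lam < 1.2721)
include hlo hhi

theorem orbit_one_mem : (1 / 2 : ℝ) ∈ Ioo (1 / (2 * lam)) (1 / (lam - 1)) := by
  constructor
  · rw [div_lt_div_iff₀ (by linarith) two_pos]; linarith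
  · rw [div_lt_div_iff₀ two_pos (by linarith)]; linarith

theorem orbit_two_mem : lam / 2 - 1 ∈ Ioo (-(1 / (2 * lam))) (1 / (2 * lam)) := by
  constructor
  · rw [neg_lt, lt_div_iff₀ (by linarith)]; nlinarith
  · rw [lt_div_iff₀ (by linarith)]; nlinarith

theorem orbit_three_mem : -lam ^ 2 / 2 + lam ∈ Ioo (1 / (2 * lam)) (1 / (lam - 1)) := by
  constructor
  · rw [div_lt_iff₀ (by linarith)]; nlinarith
  · rw [lt_div_iff₀ (by linarith)]; nlinarith

theorem orbit_four_mem (hroot : lam ^ 4 = lam ^ 2 + 1) :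
    -lam ^ 3 / 2 + lam ^ 2 - 1 ∈ Ioo (-(1 / (lam - 1))) (-(1 / (2 * lam))) := by
  constructor
  · rw [neg_lt, lt_div_iff₀ (by linarith)]; nlinarith
  · rw [lt_neg, div_lt_iff₀ (by linarith)]; nlinarith

theorem orbit_five_mem (hroot : lam ^ 4 = lam ^ 2 + 1) :
    -lam ^ 4 / 2 + lam ^ 3 - lam + 1 ∈ Ioo (1 / (2 * lam)) (1 / (lam - 1)) := by
  constructor
  · rw [div_lt_iff₀ (by linarith)]; nlinarith
  · rw [lt_div_iff₀ (by linarith)]; nlinarith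

end OrbitBranches

/-- Let `λ > 0` satisfy `λ⁴ = λ² + 1` and let `b = 0`, so `c¹ = −1/(2λ)`, `c² = 1/(2λ)` and
`a = 1/(λ−1)`. Then the turning point `c¹` of `q = q_{λ,0}` is periodic of exact period 6
with itinerary `{c¹, J², J¹, J², J⁰, J², c¹, …}`:
`q(c¹) = 1/2 ∈ (c², a)`, `q²(c¹) = λ/2 − 1 ∈ (c¹, c²)`, `q³(c¹) = −λ²/2 + λ ∈ (c², a)`,
`q⁴(c¹) = −λ³/2 + λ² − 1 ∈ (−a, c¹)`, `q⁵(c¹) = −λ⁴/2 + λ³ − λ + 1 ∈ (c², a)`, and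
`q⁶(c¹) = c¹`. -/
theorem exceptional_period_six_orbit (lam : ℝ) (hpos : 0 < lam)
    (hroot : lam ^ 4 = lam ^ 2 + 1) :
    (qmap lam 0)^[1] (-(1 / (2 * lam))) = 1 / 2 ∧
    (1 / 2 : ℝ) ∈ Set.Ioo (1 / (2 * lam)) (1 / (lam - 1)) ∧
    (qmap lam 0)^[2] (-(1 / (2 * lam))) = lam / 2 - 1 ∧
    (lam / 2 - 1) ∈ Set.Ioo (-(1 / (2 * lam))) (1 / (2 * lam)) ∧
    (qmap lam 0)^[3] (-(1 / (2 * lam))) = -lam ^ 2 / 2 + lam ∧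
    (-lam ^ 2 / 2 + lam) ∈ Set.Ioo (1 / (2 * lam)) (1 / (lam - 1)) ∧
    (qmap lam 0)^[4] (-(1 / (2 * lam))) = -lam ^ 3 / 2 + lam ^ 2 - 1 ∧
    (-lam ^ 3 / 2 + lam ^ 2 - 1) ∈ Set.Ioo (-(1 / (lam - 1))) (-(1 / (2 * lam))) ∧
    (qmap lam 0)^[5] (-(1 / (2 * lam))) = -lam ^ 4 / 2 + lam ^ 3 - lam + 1 ∧
    (-lam ^ 4 / 2 + lam ^ 3 - lam + 1) ∈ Set.Ioo (1 / (2 * lam)) (1 / (lam - 1)) ∧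
    (qmap lam 0)^[6] (-(1 / (2 * lam))) = -(1 / (2 * lam)) := by
  obtain ⟨hlo, hhi⟩ := bounds_of_sq_eq_goldenRatio hpos hroot
  have m1 := orbit_one_mem hlo hhi
  have m2 := orbit_two_mem hlo hhi
  have m3 := orbit_three_mem hlo hhi
  have m4 := orbit_four_mem hlo hhi hroot
  have m5 := orbit_five_mem hlo hhi hroot
  have i1 : (qmap lam 0)^[1] (-(1 / (2 * lam))) = 1 / 2 := by
    rw [iterate_one, qmap_of_le (le_of_eq (by ring))]; field_simp; ring
  have i2 : (qmap lam 0)^[2] (-(1 / (2 * lam))) = lam / 2 - 1 := by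
    rw [iterate_succ_apply', i1, qmap_of_lt hpos (by simpa using m1.1)]; ring
  have i3 : (qmap lam 0)^[3] (-(1 / (2 * lam))) = -lam ^ 2 / 2 + lam := by
    rw [iterate_succ_apply', i2, qmap_of_mem_Ioc (by simpa [neg_div] using Ioo_subset_Ioc_self m2)]
    ring
  have i4 : (qmap lam 0)^[4] (-(1 / (2 * lam))) = -lam ^ 3 / 2 + lam ^ 2 - 1 := by
    rw [iterate_succ_apply', i3, qmap_of_lt hpos (by simpa using m3.1)]; ring
  have i5 : (qmap lam 0)^[5] (-(1 / (2 * lam))) = -lam ^ 4 / 2 + lam ^ 3 - lam + 1 := by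
    rw [iterate_succ_apply', i4, qmap_of_le (by simpa [neg_div] using m4.2.le)]; ring
  have i6 : (qmap lam 0)^[6] (-(1 / (2 * lam))) = -(1 / (2 * lam)) := by
    rw [iterate_succ_apply', i5, qmap_of_lt hpos (by simpa using m5.1)]
    field_simp
    linear_combination -(lam - 1) ^ 2 * hroot
  exact ⟨i1, m1, i2, m2, i3, m3, i4, m4, i5, m5, i6⟩
end

section
/- Let λ > 0 satisfy λ⁴ = λ² + 1 and let q = q_{λ,0} be the corresponding bimodal map with b = 0 and turning point c¹ = −1/(2λ). Let R = [q⁴(c¹), q²(c¹)] = [−λ³/2 + λ² − 1, λ/2 − 1]. Then c¹ ∈ R and q²(R) ⊆ R; that is, R is a renormalization interval of period two around c¹ for q. -/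
set_option maxHeartbeats 1000000 in
/-- Let `λ > 0` satisfy `λ⁴ = λ² + 1`, let `q = q_{λ,0}` (with turning point `c¹ = −1/(2λ)`),
and let `R = [q⁴(c¹), q²(c¹)] = [−λ³/2 + λ² − 1, λ/2 − 1]`. Then `c¹ ∈ R` and
`q²(R) ⊆ R`: `R` is a renormalization interval of period two around `c¹`. -/
theorem renormalization_interval_period_two (lam : ℝ) (hpos : 0 < lam)
    (hroot : lam ^ 4 = lam ^ 2 + 1) :
    (qmap lam 0)^[4] (-(1 / (2 * lam))) = -lam ^ 3 / 2 + lam ^ 2 - 1 ∧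
    (qmap lam 0)^[2] (-(1 / (2 * lam))) = lam / 2 - 1 ∧
    -(1 / (2 * lam)) ∈ Set.Icc (-lam ^ 3 / 2 + lam ^ 2 - 1) (lam / 2 - 1) ∧
    (qmap lam 0)^[2] '' Set.Icc (-lam ^ 3 / 2 + lam ^ 2 - 1) (lam / 2 - 1) ⊆
      Set.Icc (-lam ^ 3 / 2 + lam ^ 2 - 1) (lam / 2 - 1) := by
  have hne : lam ≠ 0 := ne_of_gt hpos
  have h2pos : (0:ℝ) < 2 * lam := by linarith
  have hsq : 1 < lam^2 := by nlinarith [sq_nonneg lam, sq_nonneg (lam^2)]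
  have hl1 : 1 < lam := by nlinarith [hsq, hpos]
  have h1 : (2*lam^2 - 3) * (2*lam^2 + 1) = 1 := by linear_combination 4*hroot
  have hu : 3/2 < lam^2 := by nlinarith [h1, sq_nonneg lam]
  have hu2 : lam^2 < 2 := by nlinarith [sq_nonneg lam]
  have h5 : lam^5 = lam^3 + lam := by linear_combination lam * hroot
  have h6 : lam^6 = 2*lam^2 + 1 := by linear_combination (lam^2 + 1) * hroot
  have hc3 : 2 < lam^3 := by
    by_contra hcon
    push_neg at hcon
    have h8 : (lam^3 - 2) * (lam^3 + 2) = 2*lam^2 - 3 := by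
      linear_combination (lam^2 + 1) * hroot
    have hp : (0:ℝ) < lam^3 + 2 := by positivity
    have h9 := mul_nonpos_of_nonpos_of_nonneg (by linarith : lam^3 - 2 ≤ 0) hp.le
    rw [h8] at h9
    linarith [hu]
  have h3 : lam^3 < lam + 1 := by nlinarith [hl1]
  -- key inequality: 2λ² - λ³ > 1
  have hkey : 1 < 2*lam^2 - lam^3 := by
    by_contra hcon
    push_neg at hcon
    have h8 : (2*lam^2 - 1 - lam^3) * (2*lam^2 - 1 + lam^3) = 4 - 2*lam^2 := by
      linear_combination (4 - lam^2 - 1) * hroot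
    have hp : (0:ℝ) < 2*lam^2 - 1 + lam^3 := by linarith [hsq, pow_pos hpos 3]
    have h9 := mul_nonpos_of_nonpos_of_nonneg (by linarith : 2*lam^2 - 1 - lam^3 ≤ 0) hp.le
    rw [h8] at h9
    linarith [hu2]
  -- branch thresholds
  have hc1 : (0 - 1) / (2 * lam) = -(1/(2*lam)) := by ring
  have hc2 : (0 + 1) / (2 * lam) = 1/(2*lam) := by ring
  have hcpos : (0:ℝ) < 1/(2*lam) := by positivity
  -- evaluation helpers
  have q_left : ∀ x : ℝ, x ≤ -(1/(2*lam)) → qmap lam 0 x = lam * x + 1 := by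
    intro x hx
    unfold qmap
    rw [if_pos (by rw [hc1]; exact hx)]
  have q_mid : ∀ x : ℝ, -(1/(2*lam)) < x → x ≤ 1/(2*lam) → qmap lam 0 x = -lam * x := by
    intro x hx1 hx2
    unfold qmap
    rw [if_neg (by rw [hc1]; exact not_le.mpr hx1), if_pos (by rw [hc2]; exact hx2)]
    ring
  have q_right : ∀ x : ℝ, 1/(2*lam) < x → qmap lam 0 x = lam * x - 1 := by
    intro x hx
    unfold qmap
    rw [if_neg (by rw [hc1]; push_neg; linarith), if_neg (by rw [hc2]; exact not_le.mpr hx)]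
  -- the four steps from c¹
  have e1 : qmap lam 0 (-(1/(2*lam))) = 1/2 := by
    rw [q_left _ le_rfl]; field_simp; ring
  have hhalf : 1/(2*lam) < 1/2 := by
    rw [div_lt_div_iff₀ h2pos (by norm_num)]; linarith
  have e2 : qmap lam 0 (1/2 : ℝ) = lam/2 - 1 := by
    rw [q_right _ hhalf]; ring
  have e3 : qmap lam 0 (lam/2 - 1) = lam - lam^2/2 := by
    rw [q_mid _ ?_ ?_]
    · ring
    · rw [neg_lt, lt_div_iff₀ h2pos]
      nlinarith [mul_pos (sub_pos.mpr hl1) (sub_pos.mpr hl1)]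
    · rw [le_div_iff₀ h2pos]
      nlinarith [hu2, hl1]
  have e4 : qmap lam 0 (lam - lam^2/2) = -lam^3/2 + lam^2 - 1 := by
    rw [q_right _ ?_]
    · ring
    · rw [div_lt_iff₀ h2pos]; nlinarith [hkey, mul_pos hpos hpos]
  have part2 : (qmap lam 0)^[2] (-(1 / (2 * lam))) = lam / 2 - 1 := by
    show qmap lam 0 (qmap lam 0 (-(1 / (2 * lam)))) = _
    rw [e1, e2]
  have part1 : (qmap lam 0)^[4] (-(1 / (2 * lam))) = -lam ^ 3 / 2 + lam ^ 2 - 1 := by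
    show qmap lam 0 (qmap lam 0 (qmap lam 0 (qmap lam 0 (-(1 / (2 * lam)))))) = _
    rw [e1, e2, e3, e4]
  -- membership
  have hA : 2*lam^2 < lam + 2 := by
    by_contra hcon
    push_neg at hcon
    have h7 : lam^2 * (lam + 2 - 2*lam^2) = lam^3 - 2 := by linear_combination (-2)*hroot
    have h9 := mul_nonpos_of_nonneg_of_nonpos (sq_nonneg lam) (by linarith : lam + 2 - 2*lam^2 ≤ 0)
    rw [h7] at h9
    linarith [hc3]
  have hmemL : -lam ^ 3 / 2 + lam ^ 2 - 1 ≤ -(1 / (2 * lam)) := by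
    rw [show -(1/(2*lam)) = (-1)/(2*lam) by ring, le_div_iff₀ h2pos]
    have p0 := mul_le_mul_of_nonneg_left hA.le hpos.le
    linarith [p0, hroot, h5]
  have hmemR : -(1 / (2 * lam)) ≤ lam / 2 - 1 := by
    rw [neg_le, le_div_iff₀ h2pos]
    nlinarith [sq_nonneg (lam - 1)]
  have hl2 : lam < 2 := by nlinarith [hu2, hl1]
  have hdiv : lam^2 * (1/(2*lam)) = lam/2 := by field_simp
  refine ⟨part1, part2, ⟨hmemL, hmemR⟩, ?_⟩
  rintro y ⟨x, ⟨hx1, hx2⟩, rfl⟩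
  show qmap lam 0 (qmap lam 0 x) ∈ _
  by_cases hx : x ≤ -(1/(2*lam))
  · -- left branch then right branch
    have p1 := mul_le_mul_of_nonneg_left hx1 (sq_nonneg lam)
    have p2 := mul_le_mul_of_nonneg_left hx (sq_nonneg lam)
    rw [q_left _ hx]
    have hgt : 1/(2*lam) < lam * x + 1 := by
      rw [div_lt_iff₀ h2pos]
      linarith [p1, h5, hroot, h3]
    rw [q_right _ hgt]
    constructor
    · linarith [p1, h5, hroot, hA]
    · linarith [p2, hdiv]
  · push_neg at hx
    have p4 := mul_le_mul_of_nonneg_left hx2 (sq_nonneg lam)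
    have p5 := mul_le_mul_of_nonneg_left hx.le (sq_nonneg lam)
    have hxle : x ≤ 1/(2*lam) := by linarith [hx2, hcpos, hl2]
    rw [q_mid _ hx hxle]
    have hgt : 1/(2*lam) < -lam * x := by
      rw [div_lt_iff₀ h2pos]
      linarith [p4, hkey]
    rw [q_right _ hgt]
    constructor
    · linarith [p4]
    · linarith [p5, hdiv]
end

section
/- Let λ > 0 satisfy λ⁴ = λ² + 1 and set a = 1/(λ−1). There exists ε > 0 such that for all b, b′ ∈ (−ε, ε), the bimodal maps q_{λ,b} and q_{λ,b′} are topologically conjugate: there exists a homeomorphism h : [−a,a] → [−a,a] with h ∘ q_{λ,b} = q_{λ,b′} ∘ h. In particular, rigidity fails in the family of piecewise-linear bimodal maps of constant slope ±λ: an open set of parameters yields pairwise topologically conjugate maps of equal topological entropy. -/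
/-!
For `λ⁴ = λ² + 1` both turning points of `q_b` are periodic of period six,
`c¹ ↦ x₁ ↦ ⋯ ↦ x₅ ↦ c¹` and `c² ↦ y₁ ↦ ⋯ ↦ y₅ ↦ c²`, and for small `b` the order of these
twelve points and of the fixed points `±a` on the line does not depend on `b`. A semiconjugacy
`h` from `q_b` to `q_{b'}` is a fixed point of the pullback `h ↦ σ⁻¹ ∘ h ∘ q_b`, where `σ` is
the lap of `q_{b'}` matching the lap of the argument. As the laps expand by `λ > 1`, this is a
`1/λ`-contraction of the complete space of bounded continuous monotone maps sending the marked
points of `q_b` to those of `q_{b'}`, which is nonempty by piecewise-linear interpolation. For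
the fixed points `F` (from `b` to `b'`) and `G` (from `b'` to `b`), `G ∘ F` and the identity are
both fixed by the pullback from `q_b` to itself, so they agree on `[-a, a]`.
-/

open Set Function
open scoped BoundedContinuousFunction

noncomputable section

section Interpolation

def ramp (u v x : ℝ) : ℝ := (max u (min v x) - u) / (v - u)

variable {u v x : ℝ}

theorem monotone_ramp (huv : u ≤ v) : Monotone (ramp u v) := fun _ _ hxy =>
  div_le_div_of_nonneg_right (by gcongr) (sub_nonneg.2 huv)

@[fun_prop]
theorem continuous_ramp : Continuous (ramp u v) := by
  unfold ramp; fun_prop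

theorem ramp_of_le (hx : x ≤ u) : ramp u v x = 0 := by
  simp [ramp, min_le_of_right_le hx]

theorem ramp_of_ge (huv : u < v) (hx : v ≤ x) : ramp u v x = 1 := by
  rw [ramp, min_eq_left hx, max_eq_right huv.le, div_self (sub_ne_zero.2 huv.ne')]

theorem ramp_mem_Icc (huv : u < v) : ramp u v x ∈ Icc 0 1 :=
  ⟨div_nonneg (sub_nonneg.2 (le_max_left _ _)) (sub_nonneg.2 huv.le),
    (div_le_one (sub_pos.2 huv)).2 (by gcongr; exact max_le huv.le (min_le_left _ _))⟩

theorem exists_monotone_continuous_interpolation {n : ℕ} {t s : ℕ → ℝ}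
    (ht : StrictMonoOn t (Iic n)) (hs : MonotoneOn s (Iic n)) :
    ∃ f : ℝ → ℝ, Monotone f ∧ Continuous f ∧ (∀ x, f x ∈ Icc (s 0) (s n)) ∧
      ∀ j ≤ n, f (t j) = s j := by
  have ht' : ∀ i < n, t i < t (i + 1) := fun i hi =>
    ht (mem_Iic.2 hi.le) (mem_Iic.2 hi) (Nat.lt_succ_self i)
  have hs' : ∀ i ∈ Finset.range n, 0 ≤ s (i + 1) - s i := fun i hi => by
    have hi := Finset.mem_range.1 hi
    exact sub_nonneg.2 (hs (mem_Iic.2 hi.le) (mem_Iic.2 hi) (Nat.le_succ i))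
  refine ⟨fun x => s 0 + ∑ i ∈ Finset.range n, (s (i + 1) - s i) * ramp (t i) (t (i + 1)) x,
    fun x y hxy => ?_, by fun_prop, fun x => ?_, fun j hj => ?_⟩
  · dsimp only
    gcongr with i hi
    · exact hs' i hi
    · exact monotone_ramp (ht' i (Finset.mem_range.1 hi)).le hxy
  · have hramp : ∀ i ∈ Finset.range n, ramp (t i) (t (i + 1)) x ∈ Icc 0 1 := fun i hi =>
      ramp_mem_Icc (ht' i (Finset.mem_range.1 hi))
    have hsum : ∑ i ∈ Finset.range n, (s (i + 1) - s i) = s n - s 0 :=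
      Finset.sum_range_sub s n
    constructor
    · have := Finset.sum_nonneg fun i hi => mul_nonneg (hs' i hi) (hramp i hi).1
      linarith
    · have := Finset.sum_le_sum fun i hi => mul_le_of_le_one_right (hs' i hi) (hramp i hi).2
      linarith
  · have hval : ∀ i ∈ Finset.range n, ramp (t i) (t (i + 1)) (t j) = if i < j then 1 else 0 := by
      intro i hi
      have hi := Finset.mem_range.1 hi
      split_ifs with hij
      · exact ramp_of_ge (ht' i hi) (ht.monotoneOn (mem_Iic.2 hi) (mem_Iic.2 hj) hij)
      · exact ramp_of_le (ht.monotoneOn (mem_Iic.2 hj) (mem_Iic.2 hi.le) (not_lt.1 hij))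
    have hfilter : (Finset.range n).filter (· < j) = Finset.range j := by
      ext i; simp only [Finset.mem_filter, Finset.mem_range]; omega
    dsimp only
    rw [Finset.sum_congr rfl fun i hi => by rw [hval i hi, mul_ite, mul_one, mul_zero],
      ← Finset.sum_filter, hfilter, Finset.sum_range_sub s j]
    ring

end Interpolation

namespace Bimodal

def c₁ (l b : ℝ) : ℝ := (b - 1) / (2 * l)
def c₂ (l b : ℝ) : ℝ := (b + 1) / (2 * l)
def endpoint (l : ℝ) : ℝ := 1 / (l - 1)

-- `xₖ = q_b^[k] c₁` and `yₖ = q_b^[k] c₂`, written out lap by lap.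

def x₁ (b : ℝ) : ℝ := (1 + b) / 2
def x₂ (l b : ℝ) : ℝ := l * x₁ b - 1
def x₃ (l b : ℝ) : ℝ := -l * x₂ l b + b
def x₄ (l b : ℝ) : ℝ := l * x₃ l b - 1
def x₅ (l b : ℝ) : ℝ := l * x₄ l b + 1
def y₁ (b : ℝ) : ℝ := (b - 1) / 2
def y₂ (l b : ℝ) : ℝ := l * y₁ b + 1
def y₃ (l b : ℝ) : ℝ := -l * y₂ l b + b
def y₄ (l b : ℝ) : ℝ := l * y₃ l b + 1
def y₅ (l b : ℝ) : ℝ := l * y₄ l b - 1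

/-- The fixed points `±a` and the two critical orbits, in increasing order when `b` is small. -/
def marked (l b : ℝ) : ℕ → ℝ
  | 0 => -endpoint l
  | 1 => y₁ b
  | 2 => y₅ l b
  | 3 => y₃ l b
  | 4 => x₄ l b
  | 5 => c₁ l b
  | 6 => x₂ l b
  | 7 => y₂ l b
  | 8 => c₂ l b
  | 9 => y₄ l b
  | 10 => x₃ l b
  | 11 => x₅ l b
  | 12 => x₁ b
  | _ => endpoint l

def markedNext : ℕ → ℕ
  | 0 => 0
  | 1 => 7
  | 2 => 8
  | 3 => 9
  | 4 => 11
  | 5 => 12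
  | 6 => 10
  | 7 => 3
  | 8 => 1
  | 9 => 2
  | 10 => 4
  | 11 => 5
  | 12 => 6
  | _ => 13

theorem markedNext_le (j : ℕ) : markedNext j ≤ 13 := by
  unfold markedNext; split <;> norm_num

variable {l b b' x : ℝ}

theorem c₁_lt_c₂ (hl : 0 < l) : c₁ l b < c₂ l b := by
  unfold c₁ c₂; gcongr; linarith

theorem qmap_of_le_c₁ (hx : x ≤ c₁ l b) : qmap l b x = l * x + 1 := if_pos hx

theorem qmap_of_mem_Icc (hl : 0 < l) (hx : x ∈ Icc (c₁ l b) (c₂ l b)) :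
    qmap l b x = -l * x + b := by
  rcases hx.1.eq_or_lt with rfl | h
  · rw [qmap_of_le_c₁ le_rfl, c₁]; field_simp; ring
  · exact (if_neg (not_le.2 h)).trans (if_pos hx.2)

theorem qmap_of_c₂_le (hl : 0 < l) (hx : c₂ l b ≤ x) : qmap l b x = l * x - 1 := by
  rcases hx.eq_or_lt with rfl | h
  · rw [qmap_of_mem_Icc hl ⟨(c₁_lt_c₂ hl).le, le_rfl⟩, c₂]; field_simp; ring
  · exact (if_neg (not_le.2 ((c₁_lt_c₂ hl).trans h))).trans (if_neg (not_le.2 h))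

theorem qmap_c₁ (hl : 0 < l) : qmap l b (c₁ l b) = x₁ b := by
  rw [qmap_of_le_c₁ le_rfl, c₁, x₁]; field_simp; ring

theorem qmap_c₂ (hl : 0 < l) : qmap l b (c₂ l b) = y₁ b := by
  rw [qmap_of_c₂_le hl le_rfl, c₂, y₁]; field_simp; ring

theorem continuous_qmap (hl : 0 < l) : Continuous (qmap l b) := by
  refine Continuous.if_le (by fun_prop) (Continuous.if_le (by fun_prop) (by fun_prop)
    continuous_id continuous_const fun x hx => ?_) continuous_id continuous_const fun x hx => ?_
  · rw [hx]; field_simp; ring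
  · rw [hx, if_pos (by exact (c₁_lt_c₂ hl).le)]; field_simp; ring

theorem lam_mem_Ioo (hl : 0 < l) (hroot : l ^ 4 = l ^ 2 + 1) : l ∈ Ioo 1.272 1.2721 := by
  constructor <;>
    nlinarith [sq_nonneg (l ^ 2 - 1.618), sq_nonneg (l + 1.272), sq_nonneg (l + 1.2721)]

theorem marked_lt_succ (hl : 0 < l) (hroot : l ^ 4 = l ^ 2 + 1) (hb : |b| < 1 / 1000) :
    ∀ j < 13, marked l b j < marked l b (j + 1) := by
  obtain ⟨hl_gt, hl_lt⟩ := lam_mem_Ioo hl hroot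
  have hl_sq : 1.6179 < l ^ 2 ∧ l ^ 2 < 1.6183 := by constructor <;> nlinarith
  have hl_cube : 2.058 < l ^ 3 ∧ l ^ 3 < 2.059 := by constructor <;> nlinarith
  have hbl : ∀ k ≤ 4, |b * l ^ k| < 3 / 1000 := fun k hk => by
    have : l ^ k ≤ l ^ 4 := pow_le_pow_right₀ (by linarith) hk
    rw [abs_mul, abs_of_pos (pow_pos hl k)]
    nlinarith [abs_nonneg b]
  obtain ⟨e₁, e₁'⟩ := abs_lt.1 (hbl 1 (by norm_num))
  obtain ⟨e₂, e₂'⟩ := abs_lt.1 (hbl 2 (by norm_num))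
  obtain ⟨e₃, e₃'⟩ := abs_lt.1 (hbl 3 (by norm_num))
  obtain ⟨e₄, e₄'⟩ := abs_lt.1 (hbl 4 (by norm_num))
  obtain ⟨hb₁, hb₂⟩ := abs_lt.1 hb
  -- after clearing denominators each inequality is linear in the `l ^ k` and the `b * l ^ k`
  intro j hj
  interval_cases j <;>
    simp only [marked, x₁, x₂, x₃, x₄, x₅, y₁, y₂, y₃, y₄, y₅, c₁, c₂, endpoint] <;>
    first
    | rw [neg_lt, lt_div_iff₀ (by linarith)]
    | rw [lt_div_iff₀ (by linarith)]
    | rw [div_lt_iff₀ (by linarith)]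
    | skip
  all_goals ring_nf; ring_nf at e₁ e₂ e₃ e₄ e₁' e₂' e₃' e₄'; linarith

theorem strictMonoOn_marked (hl : 0 < l) (hroot : l ^ 4 = l ^ 2 + 1) (hb : |b| < 1 / 1000) :
    StrictMonoOn (marked l b) (Iic 13) :=
  strictMonoOn_Iic_of_lt_succ fun j hj => marked_lt_succ hl hroot hb j hj

theorem marked_mono (hl : 0 < l) (hroot : l ^ 4 = l ^ 2 + 1) (hb : |b| < 1 / 1000) (i j : ℕ)
    (hij : i ≤ j) (hj : j ≤ 13) : marked l b i ≤ marked l b j :=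
  (strictMonoOn_marked hl hroot hb).monotoneOn (mem_Iic.2 (hij.trans hj)) (mem_Iic.2 hj) hij

theorem qmap_marked (hl : 0 < l) (hroot : l ^ 4 = l ^ 2 + 1) (hb : |b| < 1 / 1000) {j : ℕ}
    (hj : j ≤ 13) : qmap l b (marked l b j) = marked l b (markedNext j) := by
  have hl₁ : l ≠ 1 := by linarith [(lam_mem_Ioo hl hroot).1]
  rcases le_or_gt j 5 with h5 | h5
  · rw [qmap_of_le_c₁ (marked_mono hl hroot hb j 5 h5 (by norm_num))]
    interval_cases j
    · simp only [marked, markedNext, endpoint]; field_simp; ring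
    · rfl
    · simp only [marked, markedNext, y₅, y₄, y₃, y₂, y₁, c₂]
      field_simp
      linear_combination ((1 - b) * l ^ 2 - 2 * l + (b + 1)) * hroot
    · rfl
    · rfl
    · simp only [marked, markedNext, c₁, x₁]; field_simp; ring
  rcases le_or_gt j 8 with h8 | h8
  · rw [qmap_of_mem_Icc hl ⟨marked_mono hl hroot hb 5 j h5.le hj,
      marked_mono hl hroot hb j 8 h8 (by norm_num)⟩]
    interval_cases j
    · rfl
    · rfl
    · simp only [marked, markedNext, c₂, y₁]; field_simp; ring
  · rw [qmap_of_c₂_le hl (marked_mono hl hroot hb 8 j h8.le hj)]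
    interval_cases j
    · rfl
    · rfl
    · simp only [marked, markedNext, x₅, x₄, x₃, x₂, x₁, c₁]
      field_simp
      linear_combination (-(1 + b) * l ^ 2 + 2 * l + (b - 1)) * hroot
    · rfl
    · simp only [marked, markedNext, endpoint]; field_simp; ring

theorem mapsTo_qmap (hl : 0 < l) (hroot : l ^ 4 = l ^ 2 + 1) (hb : |b| < 1 / 1000) :
    MapsTo (qmap l b) (Icc (-endpoint l) (endpoint l)) (Icc (-endpoint l) (endpoint l)) := by
  have hl₁ : l - 1 ≠ 0 := by linarith [(lam_mem_Ioo hl hroot).1]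
  have hy₁ : -endpoint l ≤ y₁ b := marked_mono hl hroot hb 0 1 (by norm_num) (by norm_num)
  have hx₁ : x₁ b ≤ endpoint l := marked_mono hl hroot hb 12 13 (by norm_num) le_rfl
  have hfix : l * endpoint l - 1 = endpoint l := by unfold endpoint; field_simp; ring
  have hc₁ : l * c₁ l b + 1 = x₁ b := (qmap_of_le_c₁ le_rfl).symm.trans (qmap_c₁ hl)
  have hc₂ : l * c₂ l b - 1 = y₁ b := (qmap_of_c₂_le hl le_rfl).symm.trans (qmap_c₂ hl)
  have hc₁' : -l * c₁ l b + b = x₁ b :=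
    (qmap_of_mem_Icc hl ⟨le_rfl, (c₁_lt_c₂ hl).le⟩).symm.trans (qmap_c₁ hl)
  have hc₂' : -l * c₂ l b + b = y₁ b :=
    (qmap_of_mem_Icc hl ⟨(c₁_lt_c₂ hl).le, le_rfl⟩).symm.trans (qmap_c₂ hl)
  rintro x ⟨hxa, hxa'⟩
  rcases le_or_gt x (c₁ l b) with h₁ | h₁
  · rw [qmap_of_le_c₁ h₁]
    constructor <;> nlinarith
  rcases le_or_gt x (c₂ l b) with h₂ | h₂
  · rw [qmap_of_mem_Icc hl ⟨h₁.le, h₂⟩]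
    constructor <;> nlinarith
  · rw [qmap_of_c₂_le hl h₂.le]
    constructor <;> nlinarith

/-- The inverse of the lap of `qmap l b'` that matches the lap of `qmap l b` containing `x`,
applied to `f (qmap l b x)`. -/
def pullback (l b b' : ℝ) (f : ℝ → ℝ) (x : ℝ) : ℝ :=
  if x ≤ c₁ l b then (f (qmap l b x) - 1) / l
  else if x ≤ c₂ l b then (b' - f (qmap l b x)) / l
  else (f (qmap l b x) + 1) / l

section Pullback

variable {f g : ℝ → ℝ}

theorem pullback_eq_iff (hl : 0 < l) {h : ℝ → ℝ} (hh : Monotone h) (h₁ : h (c₁ l b) = c₁ l b')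
    (h₂ : h (c₂ l b) = c₂ l b') (x : ℝ) :
    pullback l b b' f x = h x ↔ f (qmap l b x) = qmap l b' (h x) := by
  unfold pullback
  split_ifs with hx₁ hx₂
  · rw [qmap_of_le_c₁ ((hh hx₁).trans_eq h₁), div_eq_iff hl.ne']
    constructor <;> intro <;> linarith
  · rw [qmap_of_mem_Icc hl ⟨h₁.symm.trans_le (hh (not_le.1 hx₁).le), (hh hx₂).trans_eq h₂⟩,
      div_eq_iff hl.ne']
    constructor <;> intro <;> linarith
  · rw [qmap_of_c₂_le hl (h₂.symm.trans_le (hh (not_le.1 hx₂).le)), div_eq_iff hl.ne']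
    constructor <;> intro <;> linarith

theorem pullback_of_le_c₁ (hx : x ≤ c₁ l b) :
    pullback l b b' f x = (f (l * x + 1) - 1) / l := by
  rw [pullback, if_pos hx, qmap_of_le_c₁ hx]

theorem pullback_of_mem_Icc (hl : 0 < l) (hf : f (x₁ b) = x₁ b') (hx : x ∈ Icc (c₁ l b) (c₂ l b)) :
    pullback l b b' f x = (b' - f (-l * x + b)) / l := by
  rw [← qmap_of_mem_Icc hl hx]
  rcases hx.1.eq_or_lt with rfl | h
  · rw [pullback, if_pos le_rfl, qmap_c₁ hl, hf, x₁]; ring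
  · rw [pullback, if_neg (not_le.2 h), if_pos hx.2]

theorem pullback_of_c₂_le (hl : 0 < l) (hf : f (y₁ b) = y₁ b') (hx : c₂ l b ≤ x) :
    pullback l b b' f x = (f (l * x - 1) + 1) / l := by
  rw [← qmap_of_c₂_le hl hx]
  rcases hx.eq_or_lt with rfl | h
  · rw [pullback, if_neg (not_le.2 (c₁_lt_c₂ hl)), if_pos le_rfl, qmap_c₂ hl, hf, y₁]; ring
  · rw [pullback, if_neg (not_le.2 ((c₁_lt_c₂ hl).trans h)), if_neg (not_le.2 h)]

theorem monotone_pullback (hl : 0 < l) (hf : Monotone f) (hf₁ : f (x₁ b) = x₁ b')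
    (hf₂ : f (y₁ b) = y₁ b') : Monotone (pullback l b b' f) := by
  have hleft : MonotoneOn (pullback l b b' f) (Iic (c₁ l b)) := fun x hx y hy hxy => by
    rw [pullback_of_le_c₁ hx, pullback_of_le_c₁ hy]
    gcongr
    exact hf (by gcongr)
  have hmid : MonotoneOn (pullback l b b' f) (Icc (c₁ l b) (c₂ l b)) := fun x hx y hy hxy => by
    rw [pullback_of_mem_Icc hl hf₁ hx, pullback_of_mem_Icc hl hf₁ hy]
    gcongr
    exact hf (by nlinarith)
  have hright : MonotoneOn (pullback l b b' f) (Ici (c₂ l b)) := fun x hx y hy hxy => by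
    rw [pullback_of_c₂_le hl hf₂ hx, pullback_of_c₂_le hl hf₂ hy]
    gcongr
    exact hf (by gcongr)
  refine hleft.Iic_union_Ici ?_
  rw [← Icc_union_Ici_eq_Ici (c₁_lt_c₂ hl).le]
  exact hmid.union_right hright (isGreatest_Icc (c₁_lt_c₂ hl).le) isLeast_Ici

theorem continuous_pullback (hl : 0 < l) (hf : Continuous f) (hf₁ : f (x₁ b) = x₁ b')
    (hf₂ : f (y₁ b) = y₁ b') : Continuous (pullback l b b' f) := by
  have hfq : Continuous fun x => f (qmap l b x) := hf.comp (continuous_qmap hl)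
  refine Continuous.if_le ((hfq.sub continuous_const).div_const l)
    (Continuous.if_le ((continuous_const.sub hfq).div_const l)
      ((hfq.add continuous_const).div_const l) continuous_id continuous_const fun x hx => ?_)
    continuous_id continuous_const fun x hx => ?_
  · rw [show x = c₂ l b from hx, qmap_c₂ hl, hf₂, y₁]; ring
  · rw [if_pos (by exact hx.le.trans (c₁_lt_c₂ hl).le), show x = c₁ l b from hx, qmap_c₁ hl,
      hf₁, x₁]
    ring

theorem abs_pullback_le (hl : 1 ≤ l) (x : ℝ) :
    |pullback l b b' f x| ≤ |f (qmap l b x)| + |b'| + 1 := by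
  unfold pullback
  split_ifs <;>
    rw [abs_div, abs_of_pos (by linarith : (0 : ℝ) < l)] <;>
    refine (div_le_self (abs_nonneg _) hl).trans ?_
  · linarith [abs_sub (f (qmap l b x)) 1, abs_nonneg b', abs_one (α := ℝ)]
  · linarith [abs_sub b' (f (qmap l b x))]
  · linarith [abs_add_le (f (qmap l b x)) 1, abs_nonneg b', abs_one (α := ℝ)]

theorem abs_pullback_sub_pullback (hl : 0 < l) (x : ℝ) :
    |pullback l b b' f x - pullback l b b' g x| = |f (qmap l b x) - g (qmap l b x)| / l := by
  have h : |(f (qmap l b x) - g (qmap l b x)) / l| = |f (qmap l b x) - g (qmap l b x)| / l := by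
    rw [abs_div, abs_of_pos hl]
  rw [← h]
  unfold pullback
  split_ifs
  · congr 1; ring
  · rw [← abs_neg]; congr 1; ring
  · congr 1; ring

end Pullback

def IsMarkedMap (l b b' : ℝ) (f : ℝ → ℝ) : Prop :=
  Monotone f ∧ ∀ j ≤ 13, f (marked l b j) = marked l b' j

section MarkedMap

variable {b'' : ℝ} {f g : ℝ → ℝ}

theorem IsMarkedMap.comp (hg : IsMarkedMap l b' b'' g) (hf : IsMarkedMap l b b' f) :
    IsMarkedMap l b b'' (g ∘ f) :=
  ⟨hg.1.comp hf.1, fun j hj => by rw [comp_apply, hf.2 j hj, hg.2 j hj]⟩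

theorem IsMarkedMap.mapsTo_Icc (hf : IsMarkedMap l b b' f) :
    MapsTo f (Icc (-endpoint l) (endpoint l)) (Icc (-endpoint l) (endpoint l)) :=
  fun _ hx => ⟨(hf.2 0 (by norm_num)).symm.trans_le (hf.1 hx.1),
    (hf.1 hx.2).trans_eq (hf.2 13 le_rfl)⟩

theorem pullback_eq_self_iff (hl : 0 < l) (hf : IsMarkedMap l b b' f) :
    pullback l b b' f = f ↔ Semiconj f (qmap l b) (qmap l b') :=
  funext_iff.trans <| forall_congr' <|
    pullback_eq_iff hl hf.1 (hf.2 5 (by norm_num)) (hf.2 8 (by norm_num))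

theorem pullback_marked (hl : 0 < l) (hroot : l ^ 4 = l ^ 2 + 1) (hb : |b| < 1 / 1000)
    (hb' : |b'| < 1 / 1000) (hf : IsMarkedMap l b b' f) {j : ℕ} (hj : j ≤ 13) :
    pullback l b b' f (marked l b j) = marked l b' j := by
  rw [← hf.2 j hj, pullback_eq_iff hl hf.1 (hf.2 5 (by norm_num)) (hf.2 8 (by norm_num)),
    qmap_marked hl hroot hb hj, hf.2 j hj, qmap_marked hl hroot hb' hj, hf.2 _ (markedNext_le j)]

theorem isClosed_setOf_isMarkedMap : IsClosed {f : ℝ →ᵇ ℝ | IsMarkedMap l b b' f} := by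
  simp only [IsMarkedMap, ofPred_and, ofPred_forall]
  exact (isClosed_monotone.preimage BoundedContinuousFunction.continuous_coe).inter
    (isClosed_iInter fun j => isClosed_iInter fun _ =>
      isClosed_eq (continuous_eval_const _) continuous_const)

theorem exists_isMarkedMap (hl : 0 < l) (hroot : l ^ 4 = l ^ 2 + 1) (hb : |b| < 1 / 1000)
    (hb' : |b'| < 1 / 1000) : ∃ f : ℝ →ᵇ ℝ, IsMarkedMap l b b' f := by
  obtain ⟨f, hmono, hcont, hbdd, hval⟩ := exists_monotone_continuous_interpolation
    (strictMonoOn_marked hl hroot hb) (strictMonoOn_marked hl hroot hb').monotoneOn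
  exact ⟨.ofNormedAddCommGroup f hcont (endpoint l) fun x => abs_le.2 (hbdd x), hmono, hval⟩

theorem exists_isMarkedMap_eq_pullback (hl : 0 < l) (hroot : l ^ 4 = l ^ 2 + 1)
    (hb : |b| < 1 / 1000) (hb' : |b'| < 1 / 1000) {f : ℝ →ᵇ ℝ} (hf : IsMarkedMap l b b' f) :
    ∃ g : ℝ →ᵇ ℝ, IsMarkedMap l b b' g ∧ ⇑g = pullback l b b' f := by
  have hl₁ : 1 ≤ l := by linarith [(lam_mem_Ioo hl hroot).1]
  have hf₁ : f (x₁ b) = x₁ b' := hf.2 12 (by norm_num)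
  have hf₂ : f (y₁ b) = y₁ b' := hf.2 1 (by norm_num)
  refine ⟨.ofNormedAddCommGroup _ (continuous_pullback hl f.continuous hf₁ hf₂)
    (‖f‖ + |b'| + 1) (fun x => ?_),
    ⟨monotone_pullback hl hf.1 hf₁ hf₂, fun j hj => pullback_marked hl hroot hb hb' hf hj⟩, rfl⟩
  rw [Real.norm_eq_abs]
  linarith [abs_pullback_le (b := b) (b' := b') (f := f) hl₁ x, f.norm_coe_le_norm (qmap l b x),
    Real.norm_eq_abs (f (qmap l b x))]

theorem exists_isMarkedMap_pullback_eq_self (hl : 0 < l) (hroot : l ^ 4 = l ^ 2 + 1)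
    (hb : |b| < 1 / 1000) (hb' : |b'| < 1 / 1000) :
    ∃ F : ℝ →ᵇ ℝ, IsMarkedMap l b b' F ∧ pullback l b b' F = F := by
  have hl₁ : 1 < l := by linarith [(lam_mem_Ioo hl hroot).1]
  let S := {f : ℝ →ᵇ ℝ | IsMarkedMap l b b' f}
  have : CompleteSpace S := isClosed_setOf_isMarkedMap.completeSpace_coe
  have : Nonempty S := let ⟨f, hf⟩ := exists_isMarkedMap hl hroot hb hb'; ⟨⟨f, hf⟩⟩
  choose T hTS hT using fun f : S => exists_isMarkedMap_eq_pullback hl hroot hb hb' f.2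
  let T' : S → S := fun f => ⟨T f, hTS f⟩
  have hdist : ∀ f g : S, dist (T' f) (T' g) ≤ 1 / l * dist f g := fun f g => by
    refine (BoundedContinuousFunction.dist_le (by positivity)).2 fun x => ?_
    rw [Real.dist_eq, hT, hT, abs_pullback_sub_pullback hl, ← Real.dist_eq, one_div_mul_eq_div]
    exact div_le_div_of_nonneg_right (BoundedContinuousFunction.dist_coe_le_dist _) hl.le
  have hK : ContractingWith ⟨1 / l, (one_div_pos.2 hl).le⟩ T' :=
    ⟨(div_lt_one hl).2 hl₁, LipschitzWith.of_dist_le_mul hdist⟩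
  have hF : T' (hK.fixedPoint T') = hK.fixedPoint T' := hK.fixedPoint_isFixedPt
  refine ⟨_, (hK.fixedPoint T').2, ?_⟩
  rw [← hT, ← congrArg Subtype.val hF]

theorem eqOn_of_pullback_eq_self (hl : 1 < l) (hf : pullback l b b' f = f)
    (hg : pullback l b b' g = g) {s : Set ℝ} (hs : MapsTo (qmap l b) s s)
    (hbdd : BddAbove ((fun x => |f x - g x|) '' s)) : EqOn f g s := by
  set M := sSup ((fun x => |f x - g x|) '' s)
  have hM₀ : 0 ≤ M := Real.sSup_nonneg (forall_mem_image.2 fun _ _ => abs_nonneg _)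
  have hcontr : ∀ x ∈ s, |f x - g x| ≤ M / l := fun x hx => by
    rw [← congrFun hf x, ← congrFun hg x, abs_pullback_sub_pullback (by linarith)]
    exact div_le_div_of_nonneg_right (le_csSup hbdd (mem_image_of_mem _ (hs hx))) (by linarith)
  have hM : M = 0 := by
    have := Real.sSup_le (forall_mem_image.2 hcontr) (by positivity)
    rw [le_div_iff₀ (by linarith)] at this
    nlinarith
  intro x hx
  simpa [hM, sub_eq_zero] using hcontr x hx

theorem eqOn_id_of_semiconj (hl : 0 < l) (hroot : l ^ 4 = l ^ 2 + 1) (hb : |b| < 1 / 1000)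
    (hf : IsMarkedMap l b b f) (hq : Semiconj f (qmap l b) (qmap l b)) :
    EqOn f id (Icc (-endpoint l) (endpoint l)) := by
  have hid : pullback l b b id = id :=
    (pullback_eq_self_iff hl ⟨monotone_id, fun _ _ => rfl⟩).2 (Semiconj.id_left)
  refine eqOn_of_pullback_eq_self (by linarith [(lam_mem_Ioo hl hroot).1])
    ((pullback_eq_self_iff hl hf).2 hq) hid (mapsTo_qmap hl hroot hb)
    ⟨2 * endpoint l, forall_mem_image.2 fun x hx => ?_⟩
  have hfx := hf.mapsTo_Icc hx
  rw [id, abs_le]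
  constructor <;> linarith [hx.1, hx.2, hfx.1, hfx.2]

end MarkedMap

end Bimodal

end

open Bimodal

/-- Non-rigidity in the bimodal family: let `λ > 0` satisfy `λ⁴ = λ² + 1` and set
`a = 1/(λ−1)`. There exists `ε > 0` such that for all `b, b′ ∈ (−ε, ε)` the maps `q_{λ,b}`
and `q_{λ,b′}` are topologically conjugate by a homeomorphism `h` of `[−a, a]`
(a continuous bijection of the compact interval `[−a,a]`, hence a homeomorphism, with
`h ∘ q_{λ,b} = q_{λ,b′} ∘ h`). -/
theorem nonrigidity_bimodal (lam : ℝ) (hpos : 0 < lam) (hroot : lam ^ 4 = lam ^ 2 + 1) :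
    ∃ ε > (0 : ℝ), ∀ b ∈ Set.Ioo (-ε) ε, ∀ b' ∈ Set.Ioo (-ε) ε,
      ∃ h : ℝ → ℝ,
        Set.BijOn h (Set.Icc (-(1 / (lam - 1))) (1 / (lam - 1)))
          (Set.Icc (-(1 / (lam - 1))) (1 / (lam - 1))) ∧
        ContinuousOn h (Set.Icc (-(1 / (lam - 1))) (1 / (lam - 1))) ∧
        ∀ x ∈ Set.Icc (-(1 / (lam - 1))) (1 / (lam - 1)),
          h (qmap lam b x) = qmap lam b' (h x) := by
  refine ⟨1 / 1000, by norm_num, fun b hb b' hb' => ?_⟩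
  replace hb : |b| < 1 / 1000 := abs_lt.2 hb
  replace hb' : |b'| < 1 / 1000 := abs_lt.2 hb'
  obtain ⟨F, hF, hFfix⟩ := exists_isMarkedMap_pullback_eq_self hpos hroot hb hb'
  obtain ⟨G, hG, hGfix⟩ := exists_isMarkedMap_pullback_eq_self hpos hroot hb' hb
  have hFq := (pullback_eq_self_iff hpos hF).1 hFfix
  have hGq := (pullback_eq_self_iff hpos hG).1 hGfix
  refine ⟨F, InvOn.bijOn ⟨?_, ?_⟩ hF.mapsTo_Icc hG.mapsTo_Icc, F.continuous.continuousOn,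
    fun x _ => hFq x⟩
  · exact eqOn_id_of_semiconj hpos hroot hb (hG.comp hF) (hGq.comp_left hFq)
  · exact eqOn_id_of_semiconj hpos hroot hb' (hF.comp hG) (hFq.comp_left hGq)
end

section
/- Fix λ with 1 < λ ≤ 3, fix n ≥ 1 and a branch itinerary i₁, …, i_{n−1} ∈ {0,1,2}. Let b, b′ be admissible parameters (|b|, |b′| ≤ (3−λ)/(λ−1)) and let x_k = q_{λ,b}^k(c¹(b)) and y_k = q_{λ,b′}^k(c¹(b′)) denote the orbits of the respective turning points c¹(b) = (b−1)/(2λ), c¹(b′) = (b′−1)/(2λ). Assume that for each 1 ≤ k ≤ n−1, x_k lies in the closed branch interval of q_{λ,b} with index i_k and y_k lies in the closed branch interval of q_{λ,b′} with index i_k (index 0 means [−a,c¹], index 1 means [c¹,c²], index 2 means [c²,a], for the respective parameters). Define w₁ = 1/2 and, for 1 ≤ k ≤ n−1, w_{k+1} = λ·w_k if i_k ∈ {0,2} and w_{k+1} = −λ·w_k + 1 if i_k = 1. Then x_n − y_n = w_n·(b − b′); i.e. along a fixed itinerary the n-th iterate of the turning point depends affinely on b with coefficient w_n. -/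
/-- The closed branch intervals of `q_{λ,b}`: index `0` is `[−a, c¹]`, index `1` is
`[c¹, c²]`, index `2` is `[c², a]`, where `a = 1/(λ−1)`. -/
noncomputable def branchIcc (lam b : ℝ) : Fin 3 → Set ℝ :=
  ![Set.Icc (-(1 / (lam - 1))) ((b - 1) / (2 * lam)),
    Set.Icc ((b - 1) / (2 * lam)) ((b + 1) / (2 * lam)),
    Set.Icc ((b + 1) / (2 * lam)) (1 / (lam - 1))]

lemma qmap_on0 (lam b x : ℝ) (h : x ≤ (b - 1) / (2 * lam)) :
    qmap lam b x = lam * x + 1 := if_pos h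

lemma qmap_on1 (lam b x : ℝ) (hl : 1 < lam)
    (h1 : (b - 1) / (2 * lam) ≤ x) (h2 : x ≤ (b + 1) / (2 * lam)) :
    qmap lam b x = -lam * x + b := by
  have hl0 : lam ≠ 0 := by linarith
  unfold qmap
  by_cases h : x ≤ (b - 1) / (2 * lam)
  · rw [if_pos h]
    have hx : x = (b - 1) / (2 * lam) := le_antisymm h h1
    subst hx; field_simp; ring
  · rw [if_neg h, if_pos h2]

lemma qmap_on2 (lam b x : ℝ) (hl : 1 < lam)
    (h1 : (b + 1) / (2 * lam) ≤ x) :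
    qmap lam b x = lam * x - 1 := by
  have hl0 : lam ≠ 0 := by linarith
  have h2l : (0:ℝ) < 2 * lam := by linarith
  have hlt : (b - 1) / (2 * lam) < (b + 1) / (2 * lam) := by
    rw [div_lt_div_iff₀ h2l h2l]; nlinarith
  unfold qmap
  rw [if_neg (by linarith)]
  by_cases h : x ≤ (b + 1) / (2 * lam)
  · rw [if_pos h]
    have hx : x = (b + 1) / (2 * lam) := le_antisymm h h1
    subst hx; field_simp; ring
  · rw [if_neg h]

/-- Fix `1 < λ ≤ 3`, `n ≥ 1` and a branch itinerary `i₁, …, i_{n−1} ∈ {0,1,2}`. Let `b, b′`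
be admissible parameters whose turning-point orbits `x_k = q_{λ,b}^k(c¹(b))` and
`y_k = q_{λ,b′}^k(c¹(b′))` both follow this itinerary for `1 ≤ k ≤ n−1` (memberships in the
respective closed branch intervals). Let `w₁ = 1/2` and `w_{k+1} = −λ·w_k + 1` if `i_k = 1`,
`w_{k+1} = λ·w_k` if `i_k ∈ {0,2}`. Then `x_n − y_n = w_n·(b − b′)`: along a fixed itinerary
the `n`-th iterate of the turning point depends affinely on `b` with coefficient `w_n`. -/
theorem turning_orbit_affine_in_b (lam b b' : ℝ) (n : ℕ) (hn : 1 ≤ n)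
    (h1 : 1 < lam) (h3 : lam ≤ 3)
    (hb : |b| ≤ (3 - lam) / (lam - 1)) (hb' : |b'| ≤ (3 - lam) / (lam - 1))
    (i : ℕ → Fin 3) (w : ℕ → ℝ) (hw1 : w 1 = 1 / 2)
    (hw : ∀ k : ℕ, 1 ≤ k → k ≤ n - 1 →
      w (k + 1) = if i k = 1 then -lam * w k + 1 else lam * w k)
    (hx : ∀ k : ℕ, 1 ≤ k → k ≤ n - 1 →
      (qmap lam b)^[k] ((b - 1) / (2 * lam)) ∈ branchIcc lam b (i k))
    (hy : ∀ k : ℕ, 1 ≤ k → k ≤ n - 1 →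
      (qmap lam b')^[k] ((b' - 1) / (2 * lam)) ∈ branchIcc lam b' (i k)) :
    (qmap lam b)^[n] ((b - 1) / (2 * lam)) -
        (qmap lam b')^[n] ((b' - 1) / (2 * lam)) = w n * (b - b') := by
  have hl0 : lam ≠ 0 := by linarith
  have key : ∀ m, 1 ≤ m → m ≤ n →
      (qmap lam b)^[m] ((b - 1) / (2 * lam)) -
        (qmap lam b')^[m] ((b' - 1) / (2 * lam)) = w m * (b - b') := by
    intro m hm
    induction m, hm using Nat.le_induction with
    | base =>
      intro _
      have e1 : (qmap lam b)^[1] ((b - 1) / (2 * lam)) = (b + 1) / 2 := by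
        rw [Function.iterate_one, qmap_on0 lam b _ le_rfl]
        field_simp; ring
      have e2 : (qmap lam b')^[1] ((b' - 1) / (2 * lam)) = (b' + 1) / 2 := by
        rw [Function.iterate_one, qmap_on0 lam b' _ le_rfl]
        field_simp; ring
      rw [e1, e2, hw1]; ring
    | succ m hm ih =>
      intro hmn
      have hm1 : m ≤ n - 1 := by omega
      have hxm := hx m hm hm1
      have hym := hy m hm hm1
      have ihm := ih (by omega)
      have hwm := hw m hm hm1
      set X := (qmap lam b)^[m] ((b - 1) / (2 * lam)) with hX
      set Y := (qmap lam b')^[m] ((b' - 1) / (2 * lam)) with hY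
      rw [Function.iterate_succ_apply', Function.iterate_succ_apply', ← hX, ← hY]
      have hcase : i m = 0 ∨ i m = 1 ∨ i m = 2 := by
        have := (i m).isLt
        simp only [Fin.ext_iff]
        omega
      rcases hcase with hc | hc | hc <;> rw [hc] at hxm hym <;>
        simp only [hc, branchIcc, Matrix.cons_val_zero, Matrix.cons_val_one,
          Matrix.head_cons, Matrix.cons_val_two, Matrix.tail_cons,
          Set.mem_Icc] at hxm hym
      · rw [qmap_on0 lam b X hxm.2, qmap_on0 lam b' Y hym.2, hwm, hc, if_neg (by decide)]
        linear_combination lam * ihm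
      · rw [qmap_on1 lam b X h1 hxm.1 hxm.2, qmap_on1 lam b' Y h1 hym.1 hym.2, hwm, hc, if_pos rfl]
        linear_combination (-lam) * ihm
      · rw [qmap_on2 lam b X h1 hxm.1, qmap_on2 lam b' Y h1 hym.1, hwm, hc, if_neg (by decide)]
        linear_combination lam * ihm
  exact key n hn le_rfl
end

section
/- Let λ > 2 and let x be a real number with x < 0 or x ≥ 1/2. Then each of the numbers λ·x and −λ·x + 1 satisfies the strict version of the same condition: λ·x < 0 or λ·x > 1/2, and −λ·x + 1 < 0 or −λ·x + 1 > 1/2. Consequently, any sequence (w_k) with w₁ = 1/2 and w_{k+1} ∈ {λ·w_k, −λ·w_k + 1} for all k satisfies w_k ∈ (−∞,0) ∪ (1/2,∞) for all k ≥ 2; in particular w_k ≠ 0 and w_k ≠ 1/(2λ) for all k. -/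
/-- Let `λ > 2` and let `x < 0` or `x ≥ 1/2`. Then `λx` and `−λx + 1` both satisfy the
strict version of the same condition. Consequently, any sequence `(w_k)` with `w₁ = 1/2`
and `w_{k+1} ∈ {λ·w_k, −λ·w_k + 1}` satisfies `w_k ∈ (−∞,0) ∪ (1/2,∞)` for all `k ≥ 2`;
in particular `w_k ≠ 0` and `w_k ≠ 1/(2λ)`. -/
theorem invariance_step_lambda_gt_two (lam : ℝ) (hlam : 2 < lam) :
    (∀ x : ℝ, (x < 0 ∨ 1 / 2 ≤ x) →
      ((lam * x < 0 ∨ 1 / 2 < lam * x) ∧ (-lam * x + 1 < 0 ∨ 1 / 2 < -lam * x + 1))) ∧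
    (∀ w : ℕ → ℝ, w 1 = 1 / 2 →
      (∀ k : ℕ, 1 ≤ k → (w (k + 1) = lam * w k ∨ w (k + 1) = -lam * w k + 1)) →
      ∀ k : ℕ, 2 ≤ k →
        (w k < 0 ∨ 1 / 2 < w k) ∧ w k ≠ 0 ∧ w k ≠ 1 / (2 * lam)) := by
  have hstep : ∀ x : ℝ, (x < 0 ∨ 1 / 2 ≤ x) →
      ((lam * x < 0 ∨ 1 / 2 < lam * x) ∧ (-lam * x + 1 < 0 ∨ 1 / 2 < -lam * x + 1)) := by
    intro x hx
    rcases hx with hx | hx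
    · constructor
      · left; nlinarith
      · right; nlinarith
    · constructor
      · right; nlinarith
      · left; nlinarith
  refine ⟨hstep, ?_⟩
  intro w hw1 hrec k hk
  have hlam0 : (0:ℝ) < lam := by linarith
  have main : ∀ k : ℕ, 2 ≤ k → (w k < 0 ∨ 1 / 2 < w k) := by
    intro k hk
    induction k with
    | zero => omega
    | succ n ih =>
      rcases Nat.lt_or_ge n 2 with hn | hn
      · interval_cases n
        · omega
        · rcases hrec 1 le_rfl with h | h <;> rw [h, hw1]
          · right; nlinarith
          · left; nlinarith
      · have hin := ih (by omega)
        have hn1 : 1 ≤ n := by omega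
        rcases hrec n hn1 with h | h <;> rw [h]
        · exact ((hstep (w n) (hin.imp id le_of_lt)).1)
        · exact ((hstep (w n) (hin.imp id le_of_lt)).2)
  have h := main k hk
  refine ⟨h, ?_, ?_⟩
  · rcases h with h | h <;> intro h0 <;> rw [h0] at h <;> linarith
  · have hpos : (0:ℝ) < 1 / (2 * lam) := by positivity
    have hlt : 1 / (2 * lam) < 1 / 2 := by
      rw [div_lt_div_iff₀ (by linarith) (by norm_num)]; linarith
    rcases h with h | h <;> intro h0 <;> rw [h0] at h <;> linarith
end

section
/- Fix λ with 2 < λ ≤ 3, an integer n ≥ 1, and a branch itinerary i₁, …, i_{n−1} ∈ {0,1,2}. Suppose b and b′ are admissible parameters (|b|, |b′| ≤ (3−λ)/(λ−1)) such that: for each 1 ≤ k ≤ n−1 the iterates q_{λ,b}^k(c¹(b)) and q_{λ,b′}^k(c¹(b′)) lie in the closed branch interval of index i_k of the respective maps (index 0 means [−a,c¹], index 1 means [c¹,c²], index 2 means [c²,a]), and the turning points are periodic of period n along this itinerary: q_{λ,b}^n(c¹(b)) = c¹(b) and q_{λ,b′}^n(c¹(b′)) = c¹(b′). Then b = b′.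 In other words, for slopes λ > 2 (entropy larger than log 2), a given periodic itinerary of the turning point c¹ is realized by at most one parameter b — there are no exceptional turning points. -/
/-! Comparing the orbits of the turning points of `q_{λ,b}` and `q_{λ,b'}`, `b' < b`, along a
common itinerary: the difference `D` of the `k`-th iterates evolves by `D ↦ λD` on the outer
branches and by `D ↦ -λD + (b - b')` on the middle one. For `λ ≥ 2` both maps keep `D` out of
the gap `(-(λ-2)(b-b')/2, (b-b')/2)`, which contains the first difference `(b-b')/2` on its
boundary and the `n`-th difference `(b-b')/(2λ)` of a period-`n` pair in its interior. -/

lemma qmap_of_le_left {lam b x : ℝ} (h : x ≤ (b - 1) / (2 * lam)) :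
    qmap lam b x = lam * x + 1 := by
  simp [qmap, h]

lemma qmap_of_mem_middle {lam b x : ℝ} (hlam : 0 < lam) (h₁ : (b - 1) / (2 * lam) ≤ x)
    (h₂ : x ≤ (b + 1) / (2 * lam)) : qmap lam b x = -lam * x + b := by
  unfold qmap
  split_ifs with hc
  · obtain rfl : x = (b - 1) / (2 * lam) := le_antisymm hc h₁
    field_simp
    ring
  · rfl

lemma qmap_of_right_le {lam b x : ℝ} (hlam : 0 < lam) (h : (b + 1) / (2 * lam) ≤ x) :
    qmap lam b x = lam * x - 1 := by
  have hc : (b - 1) / (2 * lam) < (b + 1) / (2 * lam) := by gcongr; linarith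
  unfold qmap
  split_ifs with hc₁ hc₂
  · linarith
  · obtain rfl : x = (b + 1) / (2 * lam) := le_antisymm hc₂ h
    field_simp
    ring
  · rfl

lemma qmap_turningPoint (lam b : ℝ) (hlam : lam ≠ 0) :
    qmap lam b ((b - 1) / (2 * lam)) = (b + 1) / 2 := by
  rw [qmap_of_le_left le_rfl]
  field_simp
  ring

def gapIoo (lam δ : ℝ) : Set ℝ := Set.Ioo (-((lam - 2) / 2 * δ)) (δ / 2)

lemma notMem_gapIoo_iff {lam δ D : ℝ} :
    D ∉ gapIoo lam δ ↔ D ≤ -((lam - 2) / 2 * δ) ∨ δ / 2 ≤ D := by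
  rw [gapIoo, Set.mem_Ioo, not_and_or, not_lt, not_lt]

section Gap

variable {lam δ D : ℝ}

lemma mul_notMem_gapIoo (hlam : 2 ≤ lam) (hδ : 0 ≤ δ) (hD : D ∉ gapIoo lam δ) :
    lam * D ∉ gapIoo lam δ := by
  rw [notMem_gapIoo_iff] at hD ⊢
  have hgap : 0 ≤ (lam - 2) * δ := mul_nonneg (by linarith) hδ
  rcases hD with hD | hD
  · left; nlinarith
  · right; nlinarith

lemma neg_mul_add_notMem_gapIoo (hlam : 2 ≤ lam) (hδ : 0 ≤ δ) (hD : D ∉ gapIoo lam δ) :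
    -lam * D + δ ∉ gapIoo lam δ := by
  rw [notMem_gapIoo_iff] at hD ⊢
  have hgap : 0 ≤ (lam - 2) * δ := mul_nonneg (by linarith) hδ
  rcases hD with hD | hD
  · right; nlinarith
  · left; nlinarith

lemma div_mem_gapIoo (hlam : 2 ≤ lam) (hδ : 0 < δ) : δ / (2 * lam) ∈ gapIoo lam δ := by
  have hgap : 0 ≤ (lam - 2) / 2 * δ := by have := sub_nonneg.2 hlam; positivity
  exact ⟨by linarith [show 0 < δ / (2 * lam) by positivity], by gcongr; linarith⟩

end Gap

lemma qmap_sub_qmap_notMem_gapIoo {lam b b' x y : ℝ} {j : Fin 3} (hlam : 2 ≤ lam)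
    (hbb' : b' ≤ b) (hx : x ∈ branchIcc lam b j) (hy : y ∈ branchIcc lam b' j)
    (hD : x - y ∉ gapIoo lam (b - b')) :
    qmap lam b x - qmap lam b' y ∉ gapIoo lam (b - b') := by
  have hpos : 0 < lam := by linarith
  have hδ : 0 ≤ b - b' := sub_nonneg.2 hbb'
  fin_cases j <;> simp only [branchIcc, Fin.zero_eta, Fin.mk_one, Fin.reduceFinMk,
    Matrix.cons_val, Set.mem_Icc] at hx hy
  · rw [qmap_of_le_left hx.2, qmap_of_le_left hy.2]
    convert mul_notMem_gapIoo hlam hδ hD using 2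
    ring
  · rw [qmap_of_mem_middle hpos hx.1 hx.2, qmap_of_mem_middle hpos hy.1 hy.2]
    convert neg_mul_add_notMem_gapIoo hlam hδ hD using 2
    ring
  · rw [qmap_of_right_le hpos hx.1, qmap_of_right_le hpos hy.1]
    convert mul_notMem_gapIoo hlam hδ hD using 2
    ring

lemma turningPoint_orbit_sub_notMem_gapIoo {lam b b' : ℝ} {n : ℕ} (hlam : 2 ≤ lam)
    (hbb' : b' ≤ b) (i : ℕ → Fin 3)
    (hx : ∀ k : ℕ, 1 ≤ k → k ≤ n - 1 →
      (qmap lam b)^[k] ((b - 1) / (2 * lam)) ∈ branchIcc lam b (i k))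
    (hy : ∀ k : ℕ, 1 ≤ k → k ≤ n - 1 →
      (qmap lam b')^[k] ((b' - 1) / (2 * lam)) ∈ branchIcc lam b' (i k)) :
    ∀ k, 1 ≤ k → k ≤ n →
      (qmap lam b)^[k] ((b - 1) / (2 * lam)) - (qmap lam b')^[k] ((b' - 1) / (2 * lam)) ∉
        gapIoo lam (b - b') := by
  intro k hk₁ hkn
  induction k, hk₁ using Nat.le_induction with
  | base =>
    have hne : lam ≠ 0 := by positivity
    rw [Function.iterate_one, Function.iterate_one, qmap_turningPoint lam b hne,
      qmap_turningPoint lam b' hne, notMem_gapIoo_iff]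
    right
    linarith
  | succ k hk ih =>
    rw [Function.iterate_succ_apply', Function.iterate_succ_apply']
    exact qmap_sub_qmap_notMem_gapIoo hlam hbb' (hx k hk (by omega)) (hy k hk (by omega))
      (ih (by omega))

lemma le_of_periodic_itinerary {lam b b' : ℝ} {n : ℕ} (hn : 1 ≤ n) (hlam : 2 ≤ lam)
    (i : ℕ → Fin 3)
    (hx : ∀ k : ℕ, 1 ≤ k → k ≤ n - 1 →
      (qmap lam b)^[k] ((b - 1) / (2 * lam)) ∈ branchIcc lam b (i k))
    (hy : ∀ k : ℕ, 1 ≤ k → k ≤ n - 1 →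
      (qmap lam b')^[k] ((b' - 1) / (2 * lam)) ∈ branchIcc lam b' (i k))
    (hper : (qmap lam b)^[n] ((b - 1) / (2 * lam)) = (b - 1) / (2 * lam))
    (hper' : (qmap lam b')^[n] ((b' - 1) / (2 * lam)) = (b' - 1) / (2 * lam)) :
    b ≤ b' := by
  by_contra! hlt
  have hgap := turningPoint_orbit_sub_notMem_gapIoo hlam hlt.le i hx hy n hn le_rfl
  rw [hper, hper', ← sub_div, sub_sub_sub_cancel_right] at hgap
  exact hgap (div_mem_gapIoo hlam (sub_pos.2 hlt))

theorem periodic_itinerary_unique_parameter_general (lam b b' : ℝ) (n : ℕ) (hn : 1 ≤ n)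
    (h2 : 2 < lam)
    (i : ℕ → Fin 3)
    (hx : ∀ k : ℕ, 1 ≤ k → k ≤ n - 1 →
      (qmap lam b)^[k] ((b - 1) / (2 * lam)) ∈ branchIcc lam b (i k))
    (hy : ∀ k : ℕ, 1 ≤ k → k ≤ n - 1 →
      (qmap lam b')^[k] ((b' - 1) / (2 * lam)) ∈ branchIcc lam b' (i k))
    (hper : (qmap lam b)^[n] ((b - 1) / (2 * lam)) = (b - 1) / (2 * lam))
    (hper' : (qmap lam b')^[n] ((b' - 1) / (2 * lam)) = (b' - 1) / (2 * lam)) :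
    b = b' :=
  le_antisymm (le_of_periodic_itinerary hn h2.le i hx hy hper hper')
    (le_of_periodic_itinerary hn h2.le i hy hx hper' hper)

/-- No exceptional turning points for `λ > 2`: fix `2 < λ ≤ 3`, `n ≥ 1` and a branch
itinerary `i₁, …, i_{n−1} ∈ {0,1,2}`. If two admissible parameters `b, b′` are such that
both turning-point orbits follow this itinerary for `1 ≤ k ≤ n−1` and both turning points
are periodic of period `n` (`q_{λ,b}^n(c¹(b)) = c¹(b)` and `q_{λ,b′}^n(c¹(b′)) = c¹(b′)`),
then `b = b′`. -/
theorem periodic_itinerary_unique_parameter (lam b b' : ℝ) (n : ℕ) (hn : 1 ≤ n)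
    (h2 : 2 < lam) (h3 : lam ≤ 3)
    (hb : |b| ≤ (3 - lam) / (lam - 1)) (hb' : |b'| ≤ (3 - lam) / (lam - 1))
    (i : ℕ → Fin 3)
    (hx : ∀ k : ℕ, 1 ≤ k → k ≤ n - 1 →
      (qmap lam b)^[k] ((b - 1) / (2 * lam)) ∈ branchIcc lam b (i k))
    (hy : ∀ k : ℕ, 1 ≤ k → k ≤ n - 1 →
      (qmap lam b')^[k] ((b' - 1) / (2 * lam)) ∈ branchIcc lam b' (i k))
    (hper : (qmap lam b)^[n] ((b - 1) / (2 * lam)) = (b - 1) / (2 * lam))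
    (hper' : (qmap lam b')^[n] ((b' - 1) / (2 * lam)) = (b' - 1) / (2 * lam)) :
    b = b' :=
  periodic_itinerary_unique_parameter_general lam b b' n hn h2 i hx hy hper hper'
end

section
/- Let λ > 3 and let (w_k)_{k ≥ 1} be a sequence of real numbers with |w₁| = 1/2 such that for every k ≥ 1 there exist ε_k ∈ {−1, +1} and δ_k ∈ {0, 1} with w_{k+1} = ε_k·λ·w_k + δ_k. Then |w_k| > 1/2 for all k ≥ 2. -/
/-! A single step multiplies `|w|` by `λ > 3` and then moves it by at most `1`, so from
`|w| ≥ 1/2` it lands at `|w| ≥ λ/2 - 1 > 1/2`; induction from `|w₁| = 1/2` does the rest. -/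

section

variable {K : Type*} [Field K] [LinearOrder K] [IsStrictOrderedRing K]

theorem half_lt_abs_mul_add {a x d : K} (ha : 3 < |a|) (hx : 1 / 2 ≤ |x|) (hd : |d| ≤ 1) :
    1 / 2 < |a * x + d| := by
  have hax : 3 / 2 < |a * x| := by rw [abs_mul]; nlinarith [abs_nonneg x]
  calc 1 / 2 < |a * x| - |d| := by linarith
    _ ≤ |a * x + d| := by simpa using abs_sub_abs_le_abs_sub (a * x) (-d)

theorem abs_of_mem_neg_one_one {e : K} (he : e ∈ ({-1, 1} : Set K)) : |e| = 1 := by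
  rcases he with rfl | rfl <;> simp

theorem abs_le_one_of_mem_zero_one {d : K} (hd : d ∈ ({0, 1} : Set K)) : |d| ≤ 1 := by
  rcases hd with rfl | rfl <;> simp

end

/-- Let `λ > 3` and let `(w_k)` be a sequence of reals with `|w₁| = 1/2` such that for every
`k ≥ 1` there are `ε_k ∈ {−1, +1}` and `δ_k ∈ {0, 1}` with `w_{k+1} = ε_k·λ·w_k + δ_k`.
Then `|w_k| > 1/2` for all `k ≥ 2`. -/
theorem coefficient_escape_lambda_gt_three (lam : ℝ) (hlam : 3 < lam)
    (w : ℕ → ℝ) (hw1 : |w 1| = 1 / 2)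
    (hrec : ∀ k : ℕ, 1 ≤ k → ∃ eps ∈ ({-1, 1} : Set ℝ), ∃ delta ∈ ({0, 1} : Set ℝ),
      w (k + 1) = eps * lam * w k + delta) :
    ∀ k : ℕ, 2 ≤ k → 1 / 2 < |w k| := by
  have step : ∀ k, 1 ≤ k → 1 / 2 ≤ |w k| → 1 / 2 < |w (k + 1)| := by
    intro k hk hwk
    obtain ⟨eps, heps, delta, hdelta, hnext⟩ := hrec k hk
    have hslope : 3 < |eps * lam| := by
      rwa [abs_mul, abs_of_mem_neg_one_one heps, one_mul, abs_of_pos (by linarith)]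
    rw [hnext]
    exact half_lt_abs_mul_add hslope hwk (abs_le_one_of_mem_zero_one hdelta)
  intro k hk
  induction k, hk using Nat.le_induction with
  | base => exact step 1 le_rfl hw1.ge
  | succ k hk ih => exact step k (by omega) ih.le
end
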